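/- With the general construction as above, for every k ∈ ℕ, dim A(k)/E(k) ≤ Σ_{j=0}^{k} dim V^<(k−j) · dim V^>(j), where dim V^<(0) = dim V^>(0) = 1. -/

import Mathlib

/-- The degree-`k` homogeneous component `A(k)` of the free `K`-algebra `A` on two
degree-one generators `x, y`. -/
noncomputable def Adeg (K : Type*) [Field K] (k : ℕ) : Submodule K (FreeAlgebra K (Fin 2)) :=
  (Submodule.span K (Set.range (FreeAlgebra.ι K))) ^ k

/-- `x` is a monomial of `A`, i.e. a product of generators. -/
def IsMonomial (K : Type*) [Field K] (x : FreeAlgebra K (Fin 2)) : Prop :=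
  ∃ l : List (Fin 2), x = (l.map (FreeAlgebra.ι K)).prod

/-- The exponents `p₁ < p₂ < … < p_t` of the binary expansion
`k = 2^{p₁} + … + 2^{p_t}`, in increasing order. -/
def bitsOf (k : ℕ) : List ℕ := (List.range k).filter (fun p => k.testBit p)

/-- `V^<(k) = V(2^{p₁}) ⋯ V(2^{p_t})` (increasing order); here `V m` plays the role
of `V(2^m)`.  For `k = 0` this is the unit submodule (dimension one). -/
noncomputable def Vlt (K : Type*) [Field K] (V : ℕ → Submodule K (FreeAlgebra K (Fin 2)))
    (k : ℕ) : Submodule K (FreeAlgebra K (Fin 2)) :=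
  ((bitsOf k).map V).prod

/-- `V^>(k) = V(2^{p_t}) ⋯ V(2^{p₁})` (decreasing order). -/
noncomputable def Vgt (K : Type*) [Field K] (V : ℕ → Submodule K (FreeAlgebra K (Fin 2)))
    (k : ℕ) : Submodule K (FreeAlgebra K (Fin 2)) :=
  (((bitsOf k).reverse).map V).prod

/-- `U^<(k) = Σ_i A(2^{p₁}+…+2^{p_{i-1}}) U(2^{p_i}) A(2^{p_{i+1}}+…+2^{p_t})`. -/
noncomputable def Ult (K : Type*) [Field K] (U : ℕ → Submodule K (FreeAlgebra K (Fin 2)))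
    (k : ℕ) : Submodule K (FreeAlgebra K (Fin 2)) :=
  ⨆ i : Fin (bitsOf k).length,
    Adeg K (((bitsOf k).take i.val).map (fun p => 2 ^ p)).sum * U ((bitsOf k).get i) *
      Adeg K (((bitsOf k).drop (i.val + 1)).map (fun p => 2 ^ p)).sum

/-- `U^>(k) = Σ_i A(2^{p_t}+…+2^{p_{i+1}}) U(2^{p_i}) A(2^{p_{i-1}}+…+2^{p₁})`,
i.e. the analogue of `U^<` for the reversed (decreasing) order of the powers. -/
noncomputable def Ugt (K : Type*) [Field K] (U : ℕ → Submodule K (FreeAlgebra K (Fin 2)))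
    (k : ℕ) : Submodule K (FreeAlgebra K (Fin 2)) :=
  ⨆ i : Fin (bitsOf k).reverse.length,
    Adeg K ((((bitsOf k).reverse.take i.val).map (fun p => 2 ^ p)).sum) *
      U ((bitsOf k).reverse.get i) *
      Adeg K ((((bitsOf k).reverse.drop (i.val + 1)).map (fun p => 2 ^ p)).sum)

/-- The homogeneous component `E(k)`: for `k ≥ 1` and `n` with `2^{n-1} ≤ k < 2^n`
(so `n = log₂ k + 1`), `E(k) = { r ∈ A(k) : A r A ∩ A(2^{n+1}) ⊆ U(2^n)A(2^n) + A(2^n)U(2^n) }`,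
expressed via `A(i) r A(j) ⊆ U(2^n)A(2^n) + A(2^n)U(2^n)` for all `i + k + j = 2^{n+1}`. -/
noncomputable def Edeg (K : Type*) [Field K] (U : ℕ → Submodule K (FreeAlgebra K (Fin 2)))
    (k : ℕ) : Submodule K (FreeAlgebra K (Fin 2)) :=
  Adeg K k ⊓ ⨅ (i : ℕ) (j : ℕ) (_ : i + k + j = 2 ^ (Nat.log 2 k + 2))
    (a : FreeAlgebra K (Fin 2)) (_ : a ∈ Adeg K i)
    (b : FreeAlgebra K (Fin 2)) (_ : b ∈ Adeg K j),
    Submodule.comap ((LinearMap.mulRight K b).comp (LinearMap.mulLeft K a))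
      (U (Nat.log 2 k + 1) * Adeg K (2 ^ (Nat.log 2 k + 1)) +
        Adeg K (2 ^ (Nat.log 2 k + 1)) * U (Nat.log 2 k + 1))

/-!
Fix a cut point `q ≤ k`. Splitting `A(k) = A(q) A(k - q)` and writing each factor `A(2^p)` of the
binary expansions of `q` and `k - q` as `V(2^p) + U(2^p)` gives
`A(k) = V^<(q) V^>(k - q) + UCut k q`, where `UCut k q = U^<(q) A(k - q) + A(q) U^>(k - q)`.
By the absorption property, a block `U(2^p)` starting at a multiple of `2^p` inside a window
of length `2^n` is swallowed by `U(2^n)`. For every placement `A(i) · A(k) · A(j)` inside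
`A(2^(n+1))` there is a cut point at a multiple of `2^(n-1)` (or of `2^n`) such that each half
of `UCut k q` falls into a single half of the window, so `A(k) ∩ ⋂_q UCut k q ⊆ E(k)`. Hence
the codimension of `E(k)` is at most `Σ_q codim UCut k q ≤ Σ_q dim V^<(q) dim V^>(k - q)`.
-/

open Module

section LinearAlgebra

variable {K M : Type*} [Field K] [AddCommGroup M] [Module K M]

lemma finrank_quotient_inf_le [FiniteDimensional K M] (p q : Submodule K M) :
    finrank K (M ⧸ p ⊓ q) ≤ finrank K (M ⧸ p) + finrank K (M ⧸ q) := by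
  have := (p ⊓ q).finrank_quotient_add_finrank
  have := p.finrank_quotient_add_finrank
  have := q.finrank_quotient_add_finrank
  have := Submodule.finrank_sup_add_finrank_inf_eq p q
  have := (p ⊔ q).finrank_le
  omega

lemma finrank_quotient_biInf_le {ι : Type*} [FiniteDimensional K M] (s : Finset ι)
    (p : ι → Submodule K M) :
    finrank K (M ⧸ ⨅ i ∈ s, p i) ≤ ∑ i ∈ s, finrank K (M ⧸ p i) := by
  classical
  induction s using Finset.induction with
  | empty =>
    rw [show ⨅ i ∈ (∅ : Finset ι), p i = ⊤ by simp]
    simpa using finrank_zero_of_subsingleton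
  | insert a s ha ih =>
    rw [Finset.sum_insert ha, Finset.iInf_insert]
    exact (finrank_quotient_inf_le _ _).trans (Nat.add_le_add_left ih _)

lemma finrank_quotient_comap_le_of_le_sup {S W N : Submodule K M} [FiniteDimensional K W]
    (h : S ≤ W ⊔ N) : finrank K (S ⧸ N.comap S.subtype) ≤ finrank K W := by
  let f := N.mkQ ∘ₗ S.subtype
  have hker : LinearMap.ker f = N.comap S.subtype := by
    rw [LinearMap.ker_comp, Submodule.ker_mkQ]
  have hrange : LinearMap.range f ≤ LinearMap.range (N.mkQ ∘ₗ W.subtype) := by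
    rintro _ ⟨x, rfl⟩
    obtain ⟨w, hw, n, hn, hwn⟩ := Submodule.mem_sup.mp (h x.2)
    refine ⟨⟨w, hw⟩, ?_⟩
    simp [f, ← hwn, (Submodule.Quotient.mk_eq_zero N).mpr hn]
  rw [← hker, f.quotKerEquivRange.finrank_eq]
  exact (Submodule.finrank_mono hrange).trans (LinearMap.finrank_range_le _)

lemma finrank_quotient_le_sum {ι : Type*} {S E : Submodule K M} [FiniteDimensional K S]
    {s : Finset ι} {N W : ι → Submodule K M} [∀ i, FiniteDimensional K (W i)]
    (hE : S ⊓ ⨅ i ∈ s, N i ≤ E) (hS : ∀ i ∈ s, S ≤ W i ⊔ N i) :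
    finrank K (S ⧸ E.comap S.subtype) ≤ ∑ i ∈ s, finrank K (W i) := by
  have hle : ⨅ i ∈ s, (N i).comap S.subtype ≤ E.comap S.subtype := by
    intro x hx
    simp only [Submodule.mem_iInf, Submodule.mem_comap] at hx
    exact hE (Submodule.mem_inf.mpr ⟨x.2, by simpa only [Submodule.mem_iInf] using hx⟩)
  calc finrank K (S ⧸ E.comap S.subtype)
      ≤ finrank K (S ⧸ ⨅ i ∈ s, (N i).comap S.subtype) :=
        LinearMap.finrank_le_finrank_of_surjective (Submodule.factor_surjective hle)
    _ ≤ ∑ i ∈ s, finrank K (S ⧸ (N i).comap S.subtype) := finrank_quotient_biInf_le s _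
    _ ≤ ∑ i ∈ s, finrank K (W i) :=
        Finset.sum_le_sum fun i hi => finrank_quotient_comap_le_of_le_sup (hS i hi)

lemma Submodule.finrank_mul_le {A : Type*} [Ring A] [Algebra K A] (P Q : Submodule K A)
    [FiniteDimensional K P] [FiniteDimensional K Q] :
    finrank K (P * Q) ≤ finrank K P * finrank K Q := by
  rw [← Submodule.mulMap_range, ← Module.finrank_tensorProduct]
  exact LinearMap.finrank_range_le _

end LinearAlgebra

lemma bitsOf_eq_bitIndices (k : ℕ) : bitsOf k = k.bitIndices := by
  refine List.SortedLT.eq_of_mem_iff ?_ Nat.bitIndices_sorted fun p => ?_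
  · exact List.sortedLT_iff_pairwise.mpr (List.pairwise_lt_range.sublist List.filter_sublist)
  · simp only [bitsOf, List.mem_filter, List.mem_range, Nat.mem_bitIndices,
      and_iff_right_iff_imp]
    exact fun h => Nat.lt_two_pow_self.trans_le (Nat.ge_two_pow_of_testBit h)

def twoPowSum (l : List ℕ) : ℕ := (l.map (fun p => 2 ^ p)).sum

@[simp] lemma twoPowSum_nil : twoPowSum [] = 0 := rfl

@[simp] lemma twoPowSum_cons (a : ℕ) (l : List ℕ) :
    twoPowSum (a :: l) = 2 ^ a + twoPowSum l := by
  simp [twoPowSum]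

@[simp] lemma twoPowSum_reverse (l : List ℕ) : twoPowSum l.reverse = twoPowSum l := by
  simp [twoPowSum]

@[simp] lemma twoPowSum_bitsOf (k : ℕ) : twoPowSum (bitsOf k) = k := by
  rw [bitsOf_eq_bitIndices, twoPowSum, Nat.sum_map_two_pow_bitIndices]

lemma two_pow_dvd_twoPowSum {a : ℕ} {l : List ℕ} (h : ∀ p ∈ l, a ≤ p) :
    2 ^ a ∣ twoPowSum l :=
  List.dvd_sum fun _ hx => by
    obtain ⟨p, hp, rfl⟩ := List.mem_map.mp hx
    exact pow_dvd_pow 2 (h p hp)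

lemma two_pow_dvd_of_mem_bitsOf {p q t b : ℕ} (hp : p ∈ bitsOf q) (hq : q ≤ 2 ^ t)
    (hb : 2 ^ t ∣ b) : 2 ^ p ∣ b := by
  rw [bitsOf_eq_bitIndices] at hp
  have := (Nat.two_pow_le_of_mem_bitIndices hp).trans hq
  exact (pow_dvd_pow 2 ((Nat.pow_le_pow_iff_right (by norm_num)).mp this)).trans hb

-- The cut point `i + q` is `2^(m+1)`, `2^m` or `3·2^m`, whichever lies in `[i, i + k]`.
lemma exists_cut {m k i j : ℕ} (hk1 : 2 ^ m ≤ k) (hk2 : k < 2 ^ (m + 1))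
    (h : i + k + j = 2 ^ (m + 2)) :
    ∃ q ≤ k, ∃ t, 2 ^ t ∣ i + q ∧ q ≤ 2 ^ t ∧ k - q ≤ 2 ^ t ∧
      (i + q ≤ 2 ^ (m + 1) ∨ 2 ^ (m + 1) ≤ i) ∧
      (i + q + (k - q) ≤ 2 ^ (m + 1) ∨ 2 ^ (m + 1) ≤ i + q) := by
  have h1 : 2 ^ (m + 1) = 2 * 2 ^ m := by ring
  have h2 : 2 ^ (m + 2) = 4 * 2 ^ m := by ring
  by_cases hmid : i ≤ 2 ^ (m + 1) ∧ 2 ^ (m + 1) ≤ i + k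
  · refine ⟨2 ^ (m + 1) - i, by omega, m + 1, ?_, by omega, by omega, by omega, by omega⟩
    rw [Nat.add_sub_cancel' hmid.1]
  by_cases hleft : i + k < 2 ^ (m + 1)
  · refine ⟨2 ^ m - i, by omega, m, ?_, by omega, by omega, by omega, by omega⟩
    rw [Nat.add_sub_cancel' (by omega)]
  · refine ⟨3 * 2 ^ m - i, by omega, m, ?_, by omega, by omega, by omega, by omega⟩
    rw [Nat.add_sub_cancel' (by omega)]
    exact Dvd.intro_left 3 rfl

section FreeAlgebra

variable {K : Type*} [Field K] {U V : ℕ → Submodule K (FreeAlgebra K (Fin 2))}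

lemma Adeg_add (a b : ℕ) : Adeg K (a + b) = Adeg K a * Adeg K b := pow_add _ a b

@[simp] lemma Adeg_zero : Adeg K 0 = 1 := pow_zero _

instance Adeg.finiteDimensional (k : ℕ) : FiniteDimensional K (Adeg K k) :=
  Module.Finite.iff_fg.mpr ((Submodule.fg_span (Set.finite_range _)).pow k)

lemma Adeg_mul_U_mul_Adeg_le_of_add_eq
    (habs : ∀ m, Adeg K (2 ^ m) * U m + U m * Adeg K (2 ^ m) ≤ U (m + 1)) (d : ℕ) :
    ∀ p t u, t + 1 + u = 2 ^ d →
      Adeg K (2 ^ p * t) * U p * Adeg K (2 ^ p * u) ≤ U (p + d) := by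
  induction d with
  | zero =>
    intro p t u h
    obtain ⟨rfl, rfl⟩ : t = 0 ∧ u = 0 := by simp at h; omega
    simp
  | succ d ih =>
    intro p t u h
    suffices Adeg K (2 ^ p * t) * U p * Adeg K (2 ^ p * u) ≤ U (p + 1 + d) by
      rwa [add_right_comm] at this
    -- `t` even: `U(2^p)` absorbs the block `A(2^p)` to its right; `t` odd: the one to its left.
    rcases Nat.even_or_odd' t with ⟨t, rfl | rfl⟩
    · obtain ⟨u, rfl⟩ : ∃ u', u = 2 * u' + 1 := ⟨u / 2, by rw [pow_succ] at h; omega⟩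
      calc Adeg K (2 ^ p * (2 * t)) * U p * Adeg K (2 ^ p * (2 * u + 1))
          = Adeg K (2 ^ (p + 1) * t) * (U p * Adeg K (2 ^ p)) * Adeg K (2 ^ (p + 1) * u) := by
            rw [show 2 ^ p * (2 * u + 1) = 2 ^ p + 2 ^ (p + 1) * u by ring, Adeg_add,
              show 2 ^ p * (2 * t) = 2 ^ (p + 1) * t by ring]
            simp only [mul_assoc]
        _ ≤ Adeg K (2 ^ (p + 1) * t) * U (p + 1) * Adeg K (2 ^ (p + 1) * u) := by
            gcongr
            exact le_trans le_sup_right (habs p)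
        _ ≤ U (p + 1 + d) := ih _ _ _ (by rw [pow_succ] at h; omega)
    · obtain ⟨u, rfl⟩ : ∃ u', u = 2 * u' := ⟨u / 2, by rw [pow_succ] at h; omega⟩
      calc Adeg K (2 ^ p * (2 * t + 1)) * U p * Adeg K (2 ^ p * (2 * u))
          = Adeg K (2 ^ (p + 1) * t) * (Adeg K (2 ^ p) * U p) * Adeg K (2 ^ (p + 1) * u) := by
            rw [show 2 ^ p * (2 * t + 1) = 2 ^ (p + 1) * t + 2 ^ p by ring, Adeg_add,
              show 2 ^ p * (2 * u) = 2 ^ (p + 1) * u by ring]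
            simp only [mul_assoc]
        _ ≤ Adeg K (2 ^ (p + 1) * t) * U (p + 1) * Adeg K (2 ^ (p + 1) * u) := by
            gcongr
            exact le_trans le_sup_left (habs p)
        _ ≤ U (p + 1 + d) := ih _ _ _ (by rw [pow_succ] at h; omega)

lemma Adeg_mul_U_mul_Adeg_le
    (habs : ∀ m, Adeg K (2 ^ m) * U m + U m * Adeg K (2 ^ m) ≤ U (m + 1)) {p s c n : ℕ}
    (hs : 2 ^ p ∣ s) (h : s + 2 ^ p + c = 2 ^ n) : Adeg K s * U p * Adeg K c ≤ U n := by
  have hpn : p ≤ n := (Nat.pow_le_pow_iff_right (by norm_num)).mp (by omega : 2 ^ p ≤ 2 ^ n)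
  obtain ⟨d, rfl⟩ := Nat.exists_eq_add_of_le hpn
  obtain ⟨t, rfl⟩ := hs
  obtain ⟨u, rfl⟩ : 2 ^ p ∣ c := by
    have : 2 ^ p ∣ 2 ^ (p + d) := pow_dvd_pow 2 (by omega)
    rw [← h] at this
    exact (Nat.dvd_add_right ⟨t + 1, by ring⟩).mp this
  refine Adeg_mul_U_mul_Adeg_le_of_add_eq habs d p t u
    (Nat.eq_of_mul_eq_mul_left (Nat.two_pow_pos p) ?_)
  rw [← pow_add, ← h]; ring

variable (U) in
noncomputable def blockU (l : List ℕ) : Submodule K (FreeAlgebra K (Fin 2)) :=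
  ⨆ i : Fin l.length,
    Adeg K (twoPowSum (l.take i.val)) * U (l.get i) * Adeg K (twoPowSum (l.drop (i.val + 1)))

lemma Ult_eq_blockU (k : ℕ) : Ult K U k = blockU U (bitsOf k) := rfl

lemma Ugt_eq_blockU (k : ℕ) : Ugt K U k = blockU U (bitsOf k).reverse := rfl

@[simp] lemma blockU_nil : blockU U [] = ⊥ := by simp [blockU]

lemma blockU_cons (a : ℕ) (l : List ℕ) :
    blockU U (a :: l) = U a * Adeg K (twoPowSum l) ⊔ Adeg K (2 ^ a) * blockU U l := by
  apply le_antisymm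
  · refine iSup_le fun i => ?_
    induction i using Fin.cases with
    | zero => exact le_sup_of_le_left (by simp)
    | succ i =>
      refine le_sup_of_le_right (le_trans (le_of_eq ?_) (mul_le_mul_right (le_iSup _ i) _))
      simp [Adeg_add, mul_assoc]
  · refine sup_le (le_trans (le_of_eq (by simp)) (le_iSup _ (0 : Fin (l.length + 1)))) ?_
    rw [blockU, Submodule.mul_iSup]
    refine iSup_le fun i => le_trans (le_of_eq ?_) (le_iSup _ i.succ)
    simp [Adeg_add, mul_assoc]

lemma blockU_le_Adeg (hUA : ∀ m, U m ≤ Adeg K (2 ^ m)) (l : List ℕ) :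
    blockU U l ≤ Adeg K (twoPowSum l) := by
  induction l with
  | nil => simp
  | cons a l ih =>
    rw [blockU_cons, twoPowSum_cons, Adeg_add]
    exact sup_le (mul_le_mul_left (hUA a) _) (mul_le_mul_right ih _)

lemma prod_le_Adeg (hVA : ∀ m, V m ≤ Adeg K (2 ^ m)) (l : List ℕ) :
    (l.map V).prod ≤ Adeg K (twoPowSum l) := by
  induction l with
  | nil => simp
  | cons a l ih =>
    rw [List.map_cons, List.prod_cons, twoPowSum_cons, Adeg_add]
    exact mul_le_mul' (hVA a) ih

lemma Adeg_le_prod_sup_blockU (hVA : ∀ m, V m ≤ Adeg K (2 ^ m))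
    (hsum : ∀ m, V m ⊔ U m = Adeg K (2 ^ m)) (l : List ℕ) :
    Adeg K (twoPowSum l) ≤ (l.map V).prod ⊔ blockU U l := by
  induction l with
  | nil => simp
  | cons a l ih =>
    rw [twoPowSum_cons, Adeg_add, ← hsum a, Submodule.sup_mul, blockU_cons, List.map_cons,
      List.prod_cons]
    refine sup_le ?_ (le_sup_of_le_right (le_sup_of_le_left le_rfl))
    calc V a * Adeg K (twoPowSum l)
        ≤ V a * ((l.map V).prod ⊔ blockU U l) := mul_le_mul_right ih _
      _ ≤ V a * (l.map V).prod ⊔ Adeg K (2 ^ a) * blockU U l := by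
        rw [Submodule.mul_sup]
        exact sup_le_sup_left (mul_le_mul_left (hVA a) _) _
      _ ≤ _ := sup_le_sup_left le_sup_right _

lemma Adeg_mul_blockU_mul_le_of_increasing
    (habs : ∀ m, Adeg K (2 ^ m) * U m + U m * Adeg K (2 ^ m) ≤ U (m + 1)) {n : ℕ} :
    ∀ {l : List ℕ} {s c : ℕ}, l.Pairwise (· < ·) →
      (∀ p ∈ l, 2 ^ p ∣ s + twoPowSum l) → s + twoPowSum l + c = 2 ^ n →
      Adeg K s * blockU U l * Adeg K c ≤ U n
  | [], _, _, _, _, _ => by simp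
  | a :: l, s, c, hl, hdvd, h => by
    rw [List.pairwise_cons] at hl
    rw [twoPowSum_cons] at hdvd h
    have has : 2 ^ a ∣ s := by
      refine (Nat.dvd_add_left ?_).mp (hdvd a List.mem_cons_self)
      exact dvd_add dvd_rfl (two_pow_dvd_twoPowSum fun p hp => (hl.1 p hp).le)
    rw [blockU_cons, Submodule.mul_sup, Submodule.sup_mul]
    refine sup_le ?_ ?_
    · rw [← mul_assoc, mul_assoc _ _ (Adeg K c), ← Adeg_add]
      exact Adeg_mul_U_mul_Adeg_le habs has (by omega)
    · rw [← mul_assoc, ← Adeg_add]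
      refine Adeg_mul_blockU_mul_le_of_increasing habs hl.2 (fun p hp => ?_) (by omega)
      simpa [add_assoc] using hdvd p (List.mem_cons_of_mem a hp)

lemma Adeg_mul_blockU_mul_le_of_decreasing
    (habs : ∀ m, Adeg K (2 ^ m) * U m + U m * Adeg K (2 ^ m) ≤ U (m + 1)) {n : ℕ} :
    ∀ {l : List ℕ} {s c : ℕ}, l.Pairwise (· > ·) → (∀ p ∈ l, 2 ^ p ∣ s) →
      s + twoPowSum l + c = 2 ^ n → Adeg K s * blockU U l * Adeg K c ≤ U n
  | [], _, _, _, _, _ => by simp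
  | a :: l, s, c, hl, hdvd, h => by
    rw [List.pairwise_cons] at hl
    rw [twoPowSum_cons] at h
    rw [blockU_cons, Submodule.mul_sup, Submodule.sup_mul]
    refine sup_le ?_ ?_
    · rw [← mul_assoc, mul_assoc _ _ (Adeg K c), ← Adeg_add]
      exact Adeg_mul_U_mul_Adeg_le habs (hdvd a List.mem_cons_self) (by omega)
    · rw [← mul_assoc, ← Adeg_add]
      refine Adeg_mul_blockU_mul_le_of_decreasing habs hl.2 (fun p hp => ?_) (by omega)
      exact dvd_add (hdvd p (List.mem_cons_of_mem a hp)) (pow_dvd_pow 2 (hl.1 p hp).le)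

lemma bitsOf_pairwise_lt (k : ℕ) : (bitsOf k).Pairwise (· < ·) :=
  bitsOf_eq_bitIndices k ▸ Nat.bitIndices_sorted.pairwise

lemma Ult_le_Adeg (hUA : ∀ m, U m ≤ Adeg K (2 ^ m)) (k : ℕ) : Ult K U k ≤ Adeg K k := by
  have := blockU_le_Adeg hUA (bitsOf k)
  rwa [twoPowSum_bitsOf] at this

lemma Ugt_le_Adeg (hUA : ∀ m, U m ≤ Adeg K (2 ^ m)) (k : ℕ) : Ugt K U k ≤ Adeg K k := by
  have := blockU_le_Adeg hUA (bitsOf k).reverse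
  rwa [twoPowSum_reverse, twoPowSum_bitsOf] at this

lemma Vlt_le_Adeg (hVA : ∀ m, V m ≤ Adeg K (2 ^ m)) (k : ℕ) : Vlt K V k ≤ Adeg K k := by
  have := prod_le_Adeg hVA (bitsOf k)
  rwa [twoPowSum_bitsOf] at this

lemma Vgt_le_Adeg (hVA : ∀ m, V m ≤ Adeg K (2 ^ m)) (k : ℕ) : Vgt K V k ≤ Adeg K k := by
  have := prod_le_Adeg hVA (bitsOf k).reverse
  rwa [twoPowSum_reverse, twoPowSum_bitsOf] at this

lemma Adeg_le_Vlt_sup_Ult (hVA : ∀ m, V m ≤ Adeg K (2 ^ m))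
    (hsum : ∀ m, V m ⊔ U m = Adeg K (2 ^ m)) (k : ℕ) :
    Adeg K k ≤ Vlt K V k ⊔ Ult K U k := by
  have := Adeg_le_prod_sup_blockU hVA hsum (bitsOf k)
  rwa [twoPowSum_bitsOf] at this

lemma Adeg_le_Vgt_sup_Ugt (hVA : ∀ m, V m ≤ Adeg K (2 ^ m))
    (hsum : ∀ m, V m ⊔ U m = Adeg K (2 ^ m)) (k : ℕ) :
    Adeg K k ≤ Vgt K V k ⊔ Ugt K U k := by
  have := Adeg_le_prod_sup_blockU hVA hsum (bitsOf k).reverse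
  rwa [twoPowSum_reverse, twoPowSum_bitsOf] at this

lemma Adeg_mul_Ult_mul_le
    (habs : ∀ m, Adeg K (2 ^ m) * U m + U m * Adeg K (2 ^ m) ≤ U (m + 1))
    {s q c n : ℕ} (hdvd : ∀ p ∈ bitsOf q, 2 ^ p ∣ s + q) (h : s + q + c = 2 ^ n) :
    Adeg K s * Ult K U q * Adeg K c ≤ U n :=
  Adeg_mul_blockU_mul_le_of_increasing habs (bitsOf_pairwise_lt q) (by simpa using hdvd)
    (by simpa using h)

lemma Adeg_mul_Ugt_mul_le
    (habs : ∀ m, Adeg K (2 ^ m) * U m + U m * Adeg K (2 ^ m) ≤ U (m + 1))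
    {s q c n : ℕ} (hdvd : ∀ p ∈ bitsOf q, 2 ^ p ∣ s) (h : s + q + c = 2 ^ n) :
    Adeg K s * Ugt K U q * Adeg K c ≤ U n :=
  Adeg_mul_blockU_mul_le_of_decreasing habs
    (List.pairwise_reverse.mpr (bitsOf_pairwise_lt q)) (by simpa using hdvd) (by simpa using h)

variable (U) in
noncomputable def UHalves (n : ℕ) : Submodule K (FreeAlgebra K (Fin 2)) :=
  U n * Adeg K (2 ^ n) + Adeg K (2 ^ n) * U n

lemma le_UHalves_of_left {X : Submodule K (FreeAlgebra K (Fin 2))} {a c n : ℕ}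
    (h : Adeg K a * X * Adeg K c ≤ U n) : Adeg K a * X * Adeg K (c + 2 ^ n) ≤ UHalves U n := by
  rw [Adeg_add, ← mul_assoc]
  exact le_trans (mul_le_mul_left h _) le_sup_left

lemma le_UHalves_of_right {X : Submodule K (FreeAlgebra K (Fin 2))} {a c n : ℕ}
    (h : Adeg K a * X * Adeg K c ≤ U n) : Adeg K (2 ^ n + a) * X * Adeg K c ≤ UHalves U n := by
  rw [Adeg_add]
  simp only [mul_assoc] at h ⊢
  exact le_trans (mul_le_mul_right h _) le_sup_right

lemma Adeg_mul_Ult_mul_le_UHalves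
    (habs : ∀ m, Adeg K (2 ^ m) * U m + U m * Adeg K (2 ^ m) ≤ U (m + 1))
    {i q r n : ℕ} (hdvd : ∀ p ∈ bitsOf q, 2 ^ p ∣ i + q)
    (hhalf : i + q ≤ 2 ^ n ∨ 2 ^ n ≤ i)
    (h : i + q + r = 2 ^ (n + 1)) : Adeg K i * Ult K U q * Adeg K r ≤ UHalves U n := by
  rw [pow_succ] at h
  rcases hhalf with hleft | hright
  · obtain ⟨c, rfl⟩ : ∃ c, r = c + 2 ^ n := ⟨r - 2 ^ n, by omega⟩
    exact le_UHalves_of_left (Adeg_mul_Ult_mul_le habs hdvd (by omega))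
  · obtain ⟨a, rfl⟩ := Nat.exists_eq_add_of_le hright
    refine le_UHalves_of_right (Adeg_mul_Ult_mul_le habs (fun p hp => ?_) (by omega))
    have h2n : 2 ^ p ∣ 2 ^ n := two_pow_dvd_of_mem_bitsOf hp (by omega) dvd_rfl
    exact (Nat.dvd_add_right h2n).mp (by simpa [add_assoc] using hdvd p hp)

lemma Adeg_mul_Ugt_mul_le_UHalves
    (habs : ∀ m, Adeg K (2 ^ m) * U m + U m * Adeg K (2 ^ m) ≤ U (m + 1))
    {i q r n : ℕ} (hdvd : ∀ p ∈ bitsOf q, 2 ^ p ∣ i)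
    (hhalf : i + q ≤ 2 ^ n ∨ 2 ^ n ≤ i)
    (h : i + q + r = 2 ^ (n + 1)) : Adeg K i * Ugt K U q * Adeg K r ≤ UHalves U n := by
  rw [pow_succ] at h
  rcases hhalf with hleft | hright
  · obtain ⟨c, rfl⟩ : ∃ c, r = c + 2 ^ n := ⟨r - 2 ^ n, by omega⟩
    exact le_UHalves_of_left (Adeg_mul_Ugt_mul_le habs hdvd (by omega))
  · obtain ⟨a, rfl⟩ := Nat.exists_eq_add_of_le hright
    refine le_UHalves_of_right (Adeg_mul_Ugt_mul_le habs (fun p hp => ?_) (by omega))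
    have h2n : 2 ^ p ∣ 2 ^ n := two_pow_dvd_of_mem_bitsOf hp (by omega) dvd_rfl
    exact (Nat.dvd_add_right h2n).mp (hdvd p hp)

variable (U) in
noncomputable def UCut (k q : ℕ) : Submodule K (FreeAlgebra K (Fin 2)) :=
  Ult K U q * Adeg K (k - q) ⊔ Adeg K q * Ugt K U (k - q)

lemma Adeg_mul_UCut_mul_le
    (habs : ∀ m, Adeg K (2 ^ m) * U m + U m * Adeg K (2 ^ m) ≤ U (m + 1))
    {k i j : ℕ} (h : i + k + j = 2 ^ (Nat.log 2 k + 2)) :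
    ∃ q ≤ k, Adeg K i * UCut U k q * Adeg K j ≤ UHalves U (Nat.log 2 k + 1) := by
  rcases Nat.eq_zero_or_pos k with rfl | hk
  · exact ⟨0, le_rfl, by simp [UCut, Ult_eq_blockU, Ugt_eq_blockU, bitsOf]⟩
  obtain ⟨q, hqk, t, hdvd, hqt, hkqt, hhalf, hhalf'⟩ :=
    exists_cut (Nat.pow_log_le_self 2 hk.ne') (Nat.lt_pow_succ_log_self one_lt_two k) h
  refine ⟨q, hqk, ?_⟩
  rw [show Nat.log 2 k + 2 = Nat.log 2 k + 1 + 1 from rfl] at h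
  rw [UCut, Submodule.mul_sup, Submodule.sup_mul]
  refine sup_le ?_ ?_
  · rw [← mul_assoc, mul_assoc _ _ (Adeg K j), ← Adeg_add]
    exact Adeg_mul_Ult_mul_le_UHalves habs (fun p hp => two_pow_dvd_of_mem_bitsOf hp hqt hdvd)
      hhalf (by omega)
  · rw [← mul_assoc, ← Adeg_add]
    exact Adeg_mul_Ugt_mul_le_UHalves habs (fun p hp => two_pow_dvd_of_mem_bitsOf hp hkqt hdvd)
      hhalf' (by omega)

lemma le_Edeg {k : ℕ} {P : Submodule K (FreeAlgebra K (Fin 2))} (hP : P ≤ Adeg K k)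
    (h : ∀ i j, i + k + j = 2 ^ (Nat.log 2 k + 2) →
      Adeg K i * P * Adeg K j ≤ UHalves U (Nat.log 2 k + 1)) :
    P ≤ Edeg K U k := by
  refine le_inf hP (le_iInf fun i => le_iInf fun j => le_iInf fun hij => le_iInf fun a =>
    le_iInf fun ha => le_iInf fun b => le_iInf fun hb => fun r hr => ?_)
  exact h i j hij (Submodule.mul_mem_mul (Submodule.mul_mem_mul ha hr) hb)

lemma inf_iInf_UCut_le_Edeg
    (habs : ∀ m, Adeg K (2 ^ m) * U m + U m * Adeg K (2 ^ m) ≤ U (m + 1)) (k : ℕ) :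
    Adeg K k ⊓ ⨅ q ∈ Finset.range (k + 1), UCut U k q ≤ Edeg K U k := by
  refine le_Edeg inf_le_left fun i j hij => ?_
  obtain ⟨q, hqk, hq⟩ := Adeg_mul_UCut_mul_le habs hij
  refine le_trans (mul_le_mul_left (mul_le_mul_right ?_ _) _) hq
  exact inf_le_right.trans (biInf_le _ (Finset.mem_range.mpr (Nat.lt_succ_of_le hqk)))

lemma Adeg_le_Vlt_mul_Vgt_sup_UCut (hUA : ∀ m, U m ≤ Adeg K (2 ^ m))
    (hVA : ∀ m, V m ≤ Adeg K (2 ^ m)) (hsum : ∀ m, V m ⊔ U m = Adeg K (2 ^ m)) {k q : ℕ}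
    (hq : q ≤ k) : Adeg K k ≤ Vlt K V q * Vgt K V (k - q) ⊔ UCut U k q := by
  calc Adeg K k = Adeg K q * Adeg K (k - q) := by rw [← Adeg_add, Nat.add_sub_cancel' hq]
    _ ≤ (Vlt K V q ⊔ Ult K U q) * (Vgt K V (k - q) ⊔ Ugt K U (k - q)) :=
      mul_le_mul' (Adeg_le_Vlt_sup_Ult hVA hsum q) (Adeg_le_Vgt_sup_Ugt hVA hsum (k - q))
    _ ≤ _ := by
      rw [Submodule.sup_mul, Submodule.mul_sup, Submodule.mul_sup, UCut]
      refine sup_le (sup_le le_sup_left ?_) (sup_le ?_ ?_)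
      · exact le_sup_of_le_right (le_sup_of_le_right (mul_le_mul_left (Vlt_le_Adeg hVA q) _))
      · exact le_sup_of_le_right (le_sup_of_le_left (mul_le_mul_right (Vgt_le_Adeg hVA _) _))
      · exact le_sup_of_le_right (le_sup_of_le_left (mul_le_mul_right (Ugt_le_Adeg hUA _) _))

end FreeAlgebra

theorem stmt7_general {K : Type*} [Field K]
    (U V : ℕ → Submodule K (FreeAlgebra K (Fin 2)))
    (hUA : ∀ m, U m ≤ Adeg K (2 ^ m)) (hVA : ∀ m, V m ≤ Adeg K (2 ^ m))
    (hsum : ∀ m, V m ⊔ U m = Adeg K (2 ^ m))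
    (habs : ∀ m, Adeg K (2 ^ m) * U m + U m * Adeg K (2 ^ m) ≤ U (m + 1)) :
    ∀ k : ℕ,
      Module.finrank K
          (↥(Adeg K k) ⧸ Submodule.comap (Adeg K k).subtype (Edeg K U k)) ≤
        ∑ j ∈ Finset.range (k + 1),
          Module.finrank K ↥(Vlt K V (k - j)) * Module.finrank K ↥(Vgt K V j) := by
  intro k
  have (q : ℕ) : FiniteDimensional K (Vlt K V q) :=
    Submodule.finiteDimensional_of_le (Vlt_le_Adeg hVA q)
  have (q : ℕ) : FiniteDimensional K (Vgt K V q) :=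
    Submodule.finiteDimensional_of_le (Vgt_le_Adeg hVA q)
  have (q : ℕ) : FiniteDimensional K (Vlt K V q * Vgt K V (k - q)) :=
    Submodule.finiteDimensional_of_le
      ((mul_le_mul' (Vlt_le_Adeg hVA q) (Vgt_le_Adeg hVA _)).trans (Adeg_add _ _).ge)
  calc finrank K (Adeg K k ⧸ (Edeg K U k).comap (Adeg K k).subtype)
      ≤ ∑ q ∈ Finset.range (k + 1), finrank K (Vlt K V q * Vgt K V (k - q)) :=
        finrank_quotient_le_sum (inf_iInf_UCut_le_Edeg habs k) fun q hq =>
          Adeg_le_Vlt_mul_Vgt_sup_UCut hUA hVA hsum (Nat.le_of_lt_succ (Finset.mem_range.mp hq))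
    _ ≤ ∑ q ∈ Finset.range (k + 1), finrank K (Vlt K V q) * finrank K (Vgt K V (k - q)) :=
        Finset.sum_le_sum fun q _ => Submodule.finrank_mul_le _ _
    _ = ∑ j ∈ Finset.range (k + 1), finrank K (Vlt K V (k - j)) * finrank K (Vgt K V j) := by
        rw [← Finset.sum_range_reflect]
        refine Finset.sum_congr rfl fun j hj => ?_
        rw [Finset.mem_range] at hj
        rw [show k + 1 - 1 - j = k - j by omega, Nat.sub_sub_self (by omega)]

/-- Proposition 1.1: `dim A(k)/E(k) ≤ Σ_{j=0}^{k} dim V^<(k-j) · dim V^>(j)`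
(with `dim V^<(0) = dim V^>(0) = 1`, as `Vlt _ _ 0 = Vgt _ _ 0 = 1`). -/
theorem stmt7 {K : Type*} [Field K]
    (U V : ℕ → Submodule K (FreeAlgebra K (Fin 2)))
    (hUA : ∀ m, U m ≤ Adeg K (2 ^ m)) (hVA : ∀ m, V m ≤ Adeg K (2 ^ m))
    (hV0 : V 0 = Adeg K 1) (hU0 : U 0 = ⊥)
    (hVmon : ∀ m, ∃ S : Set (FreeAlgebra K (Fin 2)),
      (∀ x ∈ S, IsMonomial K x) ∧ V m = Submodule.span K S)
    (hsum : ∀ m, V m ⊔ U m = Adeg K (2 ^ m)) (hint : ∀ m, V m ⊓ U m = ⊥)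
    (habs : ∀ m, Adeg K (2 ^ m) * U m + U m * Adeg K (2 ^ m) ≤ U (m + 1))
    (hVV : ∀ m, V (m + 1) ≤ V m * V m) :
    ∀ k : ℕ,
      Module.finrank K
          (↥(Adeg K k) ⧸ Submodule.comap (Adeg K k).subtype (Edeg K U k)) ≤
        ∑ j ∈ Finset.range (k + 1),
          Module.finrank K ↥(Vlt K V (k - j)) * Module.finrank K ↥(Vgt K V j) :=
  stmt7_general U V hUA hVA hsum habs
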